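/- The function P(x,y,t) = (1/(2π D²(t−t₀)(1+(t−t₀)²/12)^{1/2})) · exp(−((y − x(t−t₀)/2)²/(2D²(t−t₀)(1+(t−t₀)²/12)) + x²/(2D²(t−t₀)))) satisfies the PDE ∂P/∂t + x ∂P/∂y = (D²/2)(∂²P/∂x² + ∂²P/∂y²) for all t > t₀. -/

import Mathlib

open Real

/-- The asymptotically self-similar Gaussian density of a particle diffusing in both
directions of a Couette flow. -/
noncomputable def shearDensity2 (D t₀ x y t : ℝ) : ℝ :=
  1 / (2 * Real.pi * D ^ 2 * (t - t₀) * Real.sqrt (1 + (t - t₀) ^ 2 / 12)) *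
    Real.exp (-((y - x * (t - t₀) / 2) ^ 2 /
        (2 * D ^ 2 * (t - t₀) * (1 + (t - t₀) ^ 2 / 12))
      + x ^ 2 / (2 * D ^ 2 * (t - t₀))))

/-! With `τ = t - t₀`, the density is `P = N(τ) · exp E(τ, x, y)` with `E` a quadratic form in
`(x, y)`: it is the law of `X ~ 𝒩(0, D²τ)` and, given `X = x`, `Y ~ 𝒩(xτ/2, D²τ(1 + τ²/12))`.
Hence `∂P = (∂E) P` and `∂²P = (∂²E + (∂E)²) P` in `x` and in `y`, and `∂_τ P = (N'/N + ∂_τE) P`;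
after dividing by `P` the Fokker–Planck equation is an identity between rational functions of
`τ, x, y`. -/

noncomputable def shearNormalization (D τ : ℝ) : ℝ :=
  1 / (2 * π * D ^ 2 * τ * √(1 + τ ^ 2 / 12))

noncomputable def shearExponent (D τ x y : ℝ) : ℝ :=
  -((y - x * τ / 2) ^ 2 / (2 * D ^ 2 * τ * (1 + τ ^ 2 / 12)) + x ^ 2 / (2 * D ^ 2 * τ))

lemma shearDensity2_eq (D t₀ x y t : ℝ) :
    shearDensity2 D t₀ x y t =
      shearNormalization D (t - t₀) * exp (shearExponent D (t - t₀) x y) := rfl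

lemma deriv_const_mul_exp_comp {c x g' : ℝ} {g : ℝ → ℝ} (hg : HasDerivAt g g' x) :
    deriv (fun u => c * exp (g u)) x = g' * (c * exp (g x)) := by
  rw [(hg.exp.const_mul c).deriv]
  ring

lemma deriv_deriv_const_mul_exp_comp {c x g'' : ℝ} {g g' : ℝ → ℝ}
    (hg : ∀ u, HasDerivAt g (g' u) u) (hg' : HasDerivAt g' g'' x) :
    deriv (fun u => deriv (fun v => c * exp (g v)) u) x = (g'' + g' x ^ 2) * (c * exp (g x)) := by
  have hderiv : (fun u => deriv (fun v => c * exp (g v)) u) = fun u => g' u * (c * exp (g u)) :=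
    funext fun u => deriv_const_mul_exp_comp (hg u)
  rw [hderiv, (hg'.fun_mul ((hg x).exp.const_mul c)).deriv]
  ring

section Derivatives

variable (D τ x y : ℝ)

lemma hasDerivAt_shearExponent_y :
    HasDerivAt (fun y => shearExponent D τ x y)
      (-(y - x * τ / 2) / (D ^ 2 * τ * (1 + τ ^ 2 / 12))) y :=
  ((((hasDerivAt_id' y).sub_const (x * τ / 2)).fun_pow 2).div_const
    (2 * D ^ 2 * τ * (1 + τ ^ 2 / 12))).add_const (x ^ 2 / (2 * D ^ 2 * τ)) |>.fun_neg
    |>.congr_deriv (by field_simp; ring)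

lemma hasDerivAt_shearExponent_y_y :
    HasDerivAt (fun y => -(y - x * τ / 2) / (D ^ 2 * τ * (1 + τ ^ 2 / 12)))
      (-1 / (D ^ 2 * τ * (1 + τ ^ 2 / 12))) y :=
  ((hasDerivAt_id' y).sub_const (x * τ / 2)).fun_neg.div_const (D ^ 2 * τ * (1 + τ ^ 2 / 12))

lemma hasDerivAt_shearExponent_x :
    HasDerivAt (fun x => shearExponent D τ x y)
      (τ * (y - x * τ / 2) / (2 * D ^ 2 * τ * (1 + τ ^ 2 / 12)) - x / (D ^ 2 * τ)) x :=
  (((((hasDerivAt_id' x).mul_const τ).div_const 2).const_sub y).fun_pow 2).div_const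
    (2 * D ^ 2 * τ * (1 + τ ^ 2 / 12)) |>.fun_add ((hasDerivAt_pow 2 x).div_const (2 * D ^ 2 * τ))
    |>.fun_neg |>.congr_deriv (by ring)

lemma hasDerivAt_shearExponent_x_x :
    HasDerivAt
      (fun x => τ * (y - x * τ / 2) / (2 * D ^ 2 * τ * (1 + τ ^ 2 / 12)) - x / (D ^ 2 * τ))
      (-(τ ^ 2 / 2) / (2 * D ^ 2 * τ * (1 + τ ^ 2 / 12)) - 1 / (D ^ 2 * τ)) x :=
  ((((((hasDerivAt_id' x).mul_const τ).div_const 2).const_sub y).const_mul τ).div_const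
    (2 * D ^ 2 * τ * (1 + τ ^ 2 / 12))).fun_sub ((hasDerivAt_id' x).div_const (D ^ 2 * τ))
    |>.congr_deriv (by ring)

variable {D τ}

lemma hasDerivAt_shearNormalization (hD : D ≠ 0) (hτ : 0 < τ) :
    HasDerivAt (shearNormalization D)
      (-(1 / τ + τ / (12 * (1 + τ ^ 2 / 12))) * shearNormalization D τ) τ := by
  have hs : 0 < 1 + τ ^ 2 / 12 := by positivity
  have hsqrt := (((hasDerivAt_id' τ).fun_pow 2).div_const 12).const_add 1 |>.sqrt hs.ne'
  have hden := ((hasDerivAt_id' τ).const_mul (2 * π * D ^ 2)).fun_mul hsqrt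
  have hden_ne : 2 * π * D ^ 2 * τ * √(1 + τ ^ 2 / 12) ≠ 0 := by positivity
  refine ((hasDerivAt_const τ (1 : ℝ)).fun_div hden hden_ne).congr_deriv ?_
  unfold shearNormalization
  have hR2 := sq_sqrt hs.le
  have hR := sqrt_pos.2 hs
  generalize √(1 + τ ^ 2 / 12) = R at *
  field_simp
  linear_combination (24 * τ ^ 2) * hR2

lemma hasDerivAt_shearExponent_time (hD : D ≠ 0) (hτ : 0 < τ) :
    HasDerivAt (fun τ => shearExponent D τ x y)
      (x * (y - x * τ / 2) / (2 * D ^ 2 * τ * (1 + τ ^ 2 / 12))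
        + (y - x * τ / 2) ^ 2 * (1 + τ ^ 2 / 4) / (2 * D ^ 2 * τ ^ 2 * (1 + τ ^ 2 / 12) ^ 2)
        + x ^ 2 / (2 * D ^ 2 * τ ^ 2)) τ := by
  have hnum := ((((hasDerivAt_id' τ).const_mul x).div_const 2).const_sub y).fun_pow 2
  have hden := ((hasDerivAt_id' τ).const_mul (2 * D ^ 2)).fun_mul
    ((((hasDerivAt_id' τ).fun_pow 2).div_const 12).const_add 1)
  have h := (hnum.fun_div hden (by positivity)).fun_add
    ((hasDerivAt_const τ (x ^ 2)).fun_div ((hasDerivAt_id' τ).const_mul (2 * D ^ 2))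
      (by positivity)) |>.fun_neg
  refine h.congr_deriv ?_
  field_simp
  ring

end Derivatives

theorem shearDensity2_satisfies_pde (D t₀ : ℝ) (hD : 0 < D) :
    ∀ x y t : ℝ, t₀ < t →
      deriv (fun s => shearDensity2 D t₀ x y s) t
        + x * deriv (fun y' => shearDensity2 D t₀ x y' t) y
      = D ^ 2 / 2 *
          (deriv (fun x' => deriv (fun x'' => shearDensity2 D t₀ x'' y t) x') x
            + deriv (fun y' => deriv (fun y'' => shearDensity2 D t₀ x y'' t) y') y) := by
  intro x y t ht
  have hτ : 0 < t - t₀ := sub_pos.2 ht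
  have htime := ((hasDerivAt_shearNormalization hD.ne' hτ).fun_mul
    (hasDerivAt_shearExponent_time x y hD.ne' hτ).exp).comp_sub_const t t₀
  simp only [shearDensity2_eq] at htime ⊢
  rw [htime.deriv, deriv_const_mul_exp_comp (hasDerivAt_shearExponent_y D (t - t₀) x y),
    deriv_deriv_const_mul_exp_comp (hasDerivAt_shearExponent_x D (t - t₀) · y)
      (hasDerivAt_shearExponent_x_x D (t - t₀) x y),
    deriv_deriv_const_mul_exp_comp (hasDerivAt_shearExponent_y D (t - t₀) x)
      (hasDerivAt_shearExponent_y_y D (t - t₀) x y)]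
  have hs : 0 < 1 + (t - t₀) ^ 2 / 12 := by positivity
  field_simp
  ring
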